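/- arXiv:math/0405210 — 4 statements merged into one kernel-verified Lean document; each statement's English description precedes it below -/
import Mathlib

section
/- Let R be a commutative ring and ξ, ν ∈ R^n. The vectors ξ and ν are linearly dependent over R (i.e., there exist a, b ∈ R, not both zero, with aξ + bν = 0) if and only if the 2×2 minors of [ξ|ν] have a common nonzero annihilator in R. -/
/-- `ξ` and `ν` are linearly dependent over `R` iff the `2×2` minors of `[ξ|ν]` have a
common nonzero annihilator. -/
theorem stmt_1 {R : Type*} [CommRing R] {n : ℕ} (hn : 1 ≤ n) (ξ ν : Fin n → R) :
    (∃ a b : R, ¬(a = 0 ∧ b = 0) ∧ ∀ i, a * ξ i + b * ν i = 0) ↔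
      (∃ r : R, r ≠ 0 ∧ ∀ i j : Fin n, r * (ξ i * ν j - ξ j * ν i) = 0) := by
  constructor
  · rintro ⟨a, b, hab, h⟩
    by_cases ha : a = 0
    · subst ha
      have hb : b ≠ 0 := fun hb => hab ⟨rfl, hb⟩
      refine ⟨b, hb, fun i j => ?_⟩
      have hi := h i
      have hj := h j
      simp only [zero_mul, zero_add] at hi hj
      linear_combination ξ i * hj - ξ j * hi
    · refine ⟨a, ha, fun i j => ?_⟩
      have hi := h i
      have hj := h j
      have hi' : a * ξ i = -(b * ν i) := by linear_combination hi
      have hj' : a * ξ j = -(b * ν j) := by linear_combination hj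
      calc a * (ξ i * ν j - ξ j * ν i)
          = (a * ξ i) * ν j - (a * ξ j) * ν i := by ring
        _ = -(b * ν i) * ν j - -(b * ν j) * ν i := by rw [hi', hj']
        _ = 0 := by ring
  · rintro ⟨r, hr, h⟩
    by_cases hz : ∃ i, r * ξ i ≠ 0 ∨ r * ν i ≠ 0
    · obtain ⟨i, hi⟩ := hz
      refine ⟨r * ν i, -(r * ξ i), ?_, fun j => ?_⟩
      · rintro ⟨h1, h2⟩
        rcases hi with hi | hi
        · exact hi (by linear_combination -h2)
        · exact hi h1
      · have := h j i
        linear_combination this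
    · push_neg at hz
      refine ⟨r, 0, fun h' => hr h'.1, fun i => ?_⟩
      rw [(hz i).1, zero_mul, add_zero]
end

section
/- Let E be the exterior algebra over a commutative ring R on generators e_1, ..., e_n with n ≥ 2, and let A be the quotient of E by the ideal generated by all elements ∂(e_i ∧ e_j ∧ e_k) = e_j∧e_k − e_i∧e_k + e_i∧e_j for distinct i, j, k (the rank-two Orlik–Solomon algebra of an n-point line). Let a_i denote the image of e_i, a_λ = Σ λ_i a_i and a_η = Σ η_i a_i for λ, η ∈ R^n. Then a_λ ∧ a_η = 0 in A if and only if for every k ∈ {1,...,n}, λ_{[n]} η_k − η_{[n]} λ_k = 0, where λ_{[n]} = Σ_i λ_i and η_{[n]} = Σ_i η_i. -/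
/-!
In `A`, the relation `∂(e_i e_j e_k) = (e_j - e_i)(e_k - e_i)` makes the product of any two
vectors with coordinate sum zero vanish. Writing `λ = λ' + λ_{[n]} e_i` and `η = η' + η_{[n]} e_i`
with `λ', η'` of sum zero therefore gives `a_λ a_η = a_i a_w` with `w = λ_{[n]} η - η_{[n]} λ`,
so `w = 0` suffices. Conversely, `v ↦ (v_{[n]}, v_k)` sends every sum-zero vector into one line
of `R²`, hence induces an algebra map `A → Λ(R²)`, and the determinant of the image of `a_λ a_η`
is `λ_{[n]} η_k - η_{[n]} λ_k`.
-/

open ExteriorAlgebra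

/-- The degree-one generator `e_i` of the exterior algebra on `R^n`. -/
noncomputable def osGen (R : Type*) [CommRing R] {n : ℕ} (i : Fin n) :
    ExteriorAlgebra R (Fin n → R) :=
  ι R (Pi.single i (1 : R))

/-- The relation defining the rank-two Orlik–Solomon algebra of the `n`-point line:
the boundaries `∂(e_i e_j e_k) = e_j e_k − e_i e_k + e_i e_j` for distinct `i, j, k`
are set to zero. -/
def u2nRel (R : Type*) [CommRing R] (n : ℕ) :
    ExteriorAlgebra R (Fin n → R) → ExteriorAlgebra R (Fin n → R) → Prop :=
  fun x y => y = 0 ∧ ∃ i j k : Fin n, i ≠ j ∧ i ≠ k ∧ j ≠ k ∧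
    x = osGen R j * osGen R k - osGen R i * osGen R k + osGen R i * osGen R j

namespace ExteriorAlgebra

variable {R M N : Type*} [CommRing R] [AddCommGroup M] [Module R M] [AddCommGroup N] [Module R N]

theorem ι_mul_ι_comm (x y : M) : ι R x * ι R y = -(ι R y * ι R x) :=
  eq_neg_of_add_eq_zero_left (ι_add_mul_swap x y)

theorem ι_mul_ι_sub_ι_mul_ι_add_ι_mul_ι (a b c : M) :
    ι R b * ι R c - ι R a * ι R c + ι R a * ι R b = ι R (b - a) * ι R (c - a) := by
  simp only [map_sub, sub_mul, mul_sub, ι_sq_zero, ι_mul_ι_comm b a]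
  abel

theorem ι_add_smul_mul_ι_add_smul (x y c : M) (s t : R) :
    ι R (x + s • c) * ι R (y + t • c) = ι R x * ι R y + ι R c * ι R (s • y - t • x) := by
  simp only [map_add, map_sub, map_smul, add_mul, mul_add, mul_sub, smul_mul_assoc,
    mul_smul_comm, ι_sq_zero, smul_zero, add_zero, ι_mul_ι_comm x c, smul_neg]
  abel

theorem ι_smul_mul_ι_smul (c : M) (s t : R) : ι R (s • c) * ι R (t • c) = 0 := by
  rw [map_smul, map_smul, smul_mul_smul_comm, ι_sq_zero, smul_zero]

theorem liftAlternating_single_two_ι_mul_ι (f : M [⋀^Fin 2]→ₗ[R] N) (x y : M) :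
    liftAlternating (Pi.single 2 f) (ι R x * ι R y) = f ![x, y] := by
  have : ι R x * ι R y = ιMulti R 2 ![x, y] := by simp [ιMulti_apply]
  rw [this, liftAlternating_apply_ιMulti, Pi.single_eq_same]

end ExteriorAlgebra

section OrlikSolomon

variable {R : Type*} [CommRing R] {n : ℕ}

theorem mkAlgHom_ι_single_sub_mul_ι_single_sub (i j k : Fin n) :
    RingQuot.mkAlgHom R (u2nRel R n)
      (ι R (Pi.single j 1 - Pi.single i 1) * ι R (Pi.single k 1 - Pi.single i 1)) = 0 := by
  rcases eq_or_ne i j with rfl | hij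
  · simp
  rcases eq_or_ne i k with rfl | hik
  · simp
  rcases eq_or_ne j k with rfl | hjk
  · rw [ι_sq_zero, map_zero]
  rw [← ι_mul_ι_sub_ι_mul_ι_add_ι_mul_ι, ← map_zero (RingQuot.mkAlgHom R (u2nRel R n))]
  exact RingQuot.mkAlgHom_rel R ⟨rfl, i, j, k, hij, hik, hjk, rfl⟩

theorem mkAlgHom_ι_mul_ι_of_sum_eq_zero {u v : Fin n → R} (hu : ∑ j, u j = 0)
    (hv : ∑ k, v k = 0) : RingQuot.mkAlgHom R (u2nRel R n) (ι R u * ι R v) = 0 := by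
  cases isEmpty_or_nonempty (Fin n)
  · simp [Subsingleton.elim u 0]
  obtain ⟨i⟩ := ‹Nonempty (Fin n)›
  have expand (w : Fin n → R) (hw : ∑ j, w j = 0) :
      w = ∑ j, w j • (Pi.single j 1 - Pi.single i 1) := by
    ext m
    simp [smul_sub, Finset.sum_sub_distrib, hw, Pi.single_apply]
  rw [expand u hu, expand v hv]
  simp only [map_sum, map_smul, Finset.sum_mul_sum, smul_mul_smul_comm,
    mkAlgHom_ι_single_sub_mul_ι_single_sub, smul_zero, Finset.sum_const_zero]

theorem mkAlgHom_ι_mul_ι (i : Fin n) (l η : Fin n → R) :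
    RingQuot.mkAlgHom R (u2nRel R n) (ι R l * ι R η) =
      RingQuot.mkAlgHom R (u2nRel R n) (osGen R i * ι R ((∑ j, l j) • η - (∑ j, η j) • l)) := by
  have split (w : Fin n → R) :
      w = (w - (∑ j, w j) • Pi.single i 1) + (∑ j, w j) • Pi.single i 1 :=
    (sub_add_cancel _ _).symm
  have sum_sub (w : Fin n → R) : ∑ j, (w - (∑ j, w j) • Pi.single i 1 : Fin n → R) j = 0 := by
    simp [Pi.single_apply]
  conv_lhs => rw [split l, split η]
  rw [ι_add_smul_mul_ι_add_smul, map_add,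
    mkAlgHom_ι_mul_ι_of_sum_eq_zero (sum_sub l) (sum_sub η), zero_add, osGen]
  congr 3
  module

def sumCoord (k : Fin n) : (Fin n → R) →ₗ[R] Fin 2 → R :=
  LinearMap.pi ![∑ i, LinearMap.proj i, LinearMap.proj k]

theorem sumCoord_apply (k : Fin n) (v : Fin n → R) : sumCoord k v = ![∑ i, v i, v k] := by
  ext m; fin_cases m <;> simp [sumCoord]

theorem sumCoord_of_sum_eq_zero (k : Fin n) {v : Fin n → R} (hv : ∑ i, v i = 0) :
    sumCoord k v = v k • Pi.single 1 1 := by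
  ext m; fin_cases m <;> simp [sumCoord_apply, hv]

theorem map_sumCoord_rel (k : Fin n) ⦃x y : ExteriorAlgebra R (Fin n → R)⦄
    (h : u2nRel R n x y) : map (sumCoord k) x = map (sumCoord k) y := by
  obtain ⟨rfl, i, j, m, -, -, -, rfl⟩ := h
  have sum_single_sub (a : Fin n) : ∑ b, (Pi.single a 1 - Pi.single i 1 : Fin n → R) b = 0 := by
    simp [Finset.sum_sub_distrib]
  rw [osGen, osGen, osGen, ι_mul_ι_sub_ι_mul_ι_add_ι_mul_ι, map_mul, map_apply_ι, map_apply_ι,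
    sumCoord_of_sum_eq_zero k (sum_single_sub j), sumCoord_of_sum_eq_zero k (sum_single_sub m),
    ι_smul_mul_ι_smul, map_zero]

noncomputable def sumCoordLift (k : Fin n) :
    RingQuot (u2nRel R n) →ₐ[R] ExteriorAlgebra R (Fin 2 → R) :=
  RingQuot.liftAlgHom R ⟨map (sumCoord k), map_sumCoord_rel k⟩

-- The coefficient of `e₀ ∧ e₁`.
noncomputable def detForm : ExteriorAlgebra R (Fin 2 → R) →ₗ[R] R :=
  liftAlternating (Pi.single 2 Matrix.detRowAlternating)

theorem detForm_sumCoordLift_mkAlgHom_ι_mul_ι (k : Fin n) (l η : Fin n → R) :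
    detForm (sumCoordLift k (RingQuot.mkAlgHom R (u2nRel R n) (ι R l * ι R η))) =
      (∑ i, l i) * η k - (∑ i, η i) * l k := by
  rw [sumCoordLift, RingQuot.liftAlgHom_mkAlgHom_apply, map_mul, map_apply_ι, map_apply_ι,
    detForm, liftAlternating_single_two_ι_mul_ι]
  change Matrix.det (Matrix.of ![sumCoord k l, sumCoord k η]) = _
  rw [sumCoord_apply, sumCoord_apply, Matrix.det_fin_two_of]
  ring

end OrlikSolomon

/-- In the rank-two Orlik–Solomon algebra `A = E/I` on `n ≥ 2` generators over a
commutative ring `R`, `a_λ ∧ a_η = 0` iff `λ_{[n]} η_k − η_{[n]} λ_k = 0` for all `k`. -/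
theorem stmt_5 {R : Type*} [CommRing R] {n : ℕ} (hn : 2 ≤ n) (l η : Fin n → R) :
    RingQuot.mkRingHom (u2nRel R n) (ι R l * ι R η) = 0 ↔
      ∀ k : Fin n, (∑ i, l i) * η k - (∑ i, η i) * l k = 0 := by
  rw [← RingQuot.mkAlgHom_coe R, AlgHom.coe_toRingHom]
  constructor
  · intro h k
    rw [← detForm_sumCoordLift_mkAlgHom_ι_mul_ι, h, map_zero, map_zero]
  · intro h
    have hw : (∑ j, l j) • η - (∑ j, η j) • l = 0 := by
      ext k; simpa [mul_comm] using h k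
    rw [mkAlgHom_ι_mul_ι ⟨0, by omega⟩, hw, map_zero, mul_zero, map_zero]
end

section
/- Let R be an integral domain and A the rank-two Orlik–Solomon algebra on n generators over R. For λ, η ∈ R^n, a_λ ∧ a_η = 0 if and only if λ and η are parallel, or n ≥ 3 and λ_{[n]} = 0 = η_{[n]}. -/
open ExteriorAlgebra

/-! In `A` the relations say `a_i a_j = a_z a_j - a_z a_i` for any fixed index `z`, so bilinearity
gives `a_λ a_η = a_z a_{λ_{[n]} η - η_{[n]} λ}`, which vanishes when `λ_{[n]} η = η_{[n]} λ`.
Conversely, for each `j` the linear map `R^n → R^2`, `v ↦ (v_{[n]}, v_j)` sends every generator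
to the affine line `x_0 = 1`, so the induced map of exterior algebras kills the relations; the
`2 × 2` determinant of the image of `a_λ a_η` is `λ_{[n]} η_j - η_{[n]} λ_j`, which must vanish.
Over a domain, `λ_{[n]} η = η_{[n]} λ` means parallel unless both sums vanish, and for `n ≤ 2`
two vectors with zero coordinate sum are parallel anyway. -/

section FinTwo

variable {R : Type*} [CommRing R]

lemma ι_mul_ι_fin_two (a b : Fin 2 → R) :
    ι R a * ι R b = (a 0 * b 1 - a 1 * b 0) • (osGen R 0 * osGen R 1) := by
  have hsplit (v : Fin 2 → R) : ι R v = v 0 • osGen R 0 + v 1 • osGen R 1 := by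
    rw [osGen, osGen, ← map_smul, ← map_smul, ← map_add]
    congr 1
    funext k
    fin_cases k <;> simp
  have hsq (i : Fin 2) : osGen R i * osGen R i = 0 := ι_sq_zero _
  have hswap : osGen R 1 * osGen R 0 = -(osGen R (0 : Fin 2) * osGen R 1) :=
    eq_neg_of_add_eq_zero_left (ι_add_mul_swap _ _)
  rw [hsplit a, hsplit b]
  simp only [add_mul, mul_add, smul_mul_smul_comm, hsq, hswap]
  module

noncomputable def detForms : ∀ k : ℕ, (Fin 2 → R) [⋀^Fin k]→ₗ[R] R
  | 2 => Matrix.detRowAlternating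
  | _ => 0

lemma liftAlternating_detForms_ι_mul_ι (a b : Fin 2 → R) :
    liftAlternating detForms (ι R a * ι R b) = a 0 * b 1 - a 1 * b 0 := by
  rw [liftAlternating_ι_mul, liftAlternating_ι]
  exact Matrix.det_fin_two_of _ _ _ _

end FinTwo

section OrlikSolomon

variable {R : Type*} [CommRing R] {n : ℕ}

local notation "mk" => RingQuot.mkAlgHom R (u2nRel R n)

noncomputable def heightMap (w : Fin n → R) : (Fin n → R) →ₗ[R] Fin 2 → R :=
  Matrix.toLin' (Matrix.of ![1, w])

lemma heightMap_apply (w v : Fin n → R) : heightMap w v = ![∑ i, v i, w ⬝ᵥ v] := by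
  funext k
  fin_cases k <;> simp [heightMap, Matrix.mulVec, dotProduct]

lemma map_heightMap_osGen (w : Fin n → R) (i : Fin n) :
    map (heightMap w) (osGen R i) = ι R ![1, w i] := by
  rw [osGen, map_apply_ι, heightMap_apply, dotProduct_single_one]
  simp

lemma map_heightMap_respects_u2nRel (w : Fin n → R) ⦃x y : ExteriorAlgebra R (Fin n → R)⦄
    (h : u2nRel R n x y) : map (heightMap w) x = map (heightMap w) y := by
  obtain ⟨rfl, i, j, k, -, -, -, rfl⟩ := h
  simp only [map_add, map_sub, map_mul, map_heightMap_osGen, ι_mul_ι_fin_two, ← sub_smul,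
    ← add_smul, map_zero, Matrix.cons_val_zero, Matrix.cons_val_one, Matrix.cons_val_fin_one]
  exact smul_eq_zero_of_left (by ring) _

lemma sum_smul_eq_sum_smul_of_mk_ι_mul_ι_eq_zero {l η : Fin n → R}
    (h : mk (ι R l * ι R η) = 0) :
    (∑ i, l i) • η = (∑ i, η i) • l := by
  funext j
  have hmap : map (heightMap (Pi.single j 1)) (ι R l * ι R η) = 0 := by
    rw [← RingQuot.liftAlgHom_mkAlgHom_apply R _ (map_heightMap_respects_u2nRel _), h, map_zero]
  have hdet := congrArg (liftAlternating detForms) hmap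
  rw [map_mul, map_apply_ι, map_apply_ι, liftAlternating_detForms_ι_mul_ι, heightMap_apply,
    heightMap_apply, map_zero] at hdet
  simp only [single_one_dotProduct, Matrix.cons_val_zero, Matrix.cons_val_one,
    Matrix.cons_val_fin_one, Pi.smul_apply, smul_eq_mul] at hdet ⊢
  linear_combination hdet

lemma ι_eq_sum_smul_osGen (v : Fin n → R) : ι R v = ∑ i, v i • osGen R i := by
  nth_rw 1 [pi_eq_sum_univ' v]
  simp only [map_sum, map_smul, osGen]

lemma osGen_mul_osGen_swap (i j : Fin n) : osGen R i * osGen R j = -(osGen R j * osGen R i) :=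
  eq_neg_of_add_eq_zero_left (ι_add_mul_swap _ _)

lemma mk_osGen_mul_osGen (z i j : Fin n) :
    mk (osGen R i * osGen R j) = mk (osGen R z * osGen R j) - mk (osGen R z * osGen R i) := by
  have hsq (k : Fin n) : osGen R k * osGen R k = 0 := ι_sq_zero _
  by_cases hij : i = j
  · rw [hij, sub_self, hsq, map_zero]
  by_cases hzi : z = i
  · rw [hzi, hsq, map_zero, sub_zero]
  by_cases hzj : z = j
  · rw [hzj, hsq, map_zero, zero_sub, osGen_mul_osGen_swap, map_neg]
  have hrel := RingQuot.mkAlgHom_rel R (s := u2nRel R n) ⟨rfl, z, i, j, hzi, hzj, hij, rfl⟩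
  rw [map_add, map_sub, map_zero] at hrel
  rw [← sub_eq_zero, ← hrel]
  abel

lemma mk_ι_mul_ι (z : Fin n) (l η : Fin n → R) :
    mk (ι R l * ι R η) = mk (osGen R z * ι R ((∑ i, l i) • η - (∑ i, η i) • l)) := by
  let g := (mk).toLinearMap ∘ₗ LinearMap.mulLeft R (osGen R z) ∘ₗ ι R
  have hg (i j : Fin n) : mk (osGen R i * osGen R j) = g (Pi.single j 1 - Pi.single i 1) := by
    rw [mk_osGen_mul_osGen z, map_sub]
    rfl
  calc mk (ι R l * ι R η)
      = ∑ i, ∑ j, (l i * η j) • mk (osGen R i * osGen R j) := by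
        simp only [ι_eq_sum_smul_osGen l, ι_eq_sum_smul_osGen η, Finset.sum_mul_sum,
          smul_mul_smul_comm, map_sum, map_smul]
    _ = g (∑ i, ∑ j, (l i * η j) • (Pi.single j 1 - Pi.single i 1)) := by
        simp only [hg, map_sum, map_smul]
    _ = g ((∑ i, l i) • η - (∑ i, η i) • l) := by
        congr 1
        funext k
        simp [Finset.sum_apply, mul_sub, Pi.single_apply, Finset.mul_sum, mul_comm]

lemma mk_ι_mul_ι_eq_zero_iff (l η : Fin n → R) :
    mk (ι R l * ι R η) = 0 ↔ (∑ i, l i) • η = (∑ i, η i) • l := by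
  refine ⟨sum_smul_eq_sum_smul_of_mk_ι_mul_ι_eq_zero, fun h => ?_⟩
  obtain _ | ⟨⟨z⟩⟩ := isEmpty_or_nonempty (Fin n)
  · rw [Subsingleton.elim l 0, map_zero, zero_mul, map_zero]
  · rw [mk_ι_mul_ι z, h, sub_self, map_zero, mul_zero, map_zero]

end OrlikSolomon

section Parallel

variable {R : Type*} [CommRing R] {n : ℕ} {l η : Fin n → R}

lemma sum_smul_eq_sum_smul_of_parallel (h : ∀ i j, l i * η j - l j * η i = 0) :
    (∑ i, l i) • η = (∑ i, η i) • l := by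
  funext j
  simp only [Pi.smul_apply, smul_eq_mul, Finset.sum_mul]
  exact Finset.sum_congr rfl fun i _ => by linear_combination h i j

lemma parallel_of_sum_eq_zero (hn : n < 3) (hl : ∑ i, l i = 0) (hη : ∑ i, η i = 0) (i j : Fin n) :
    l i * η j - l j * η i = 0 := by
  by_cases hij : i = j
  · rw [hij, sub_self]
  have huniv : ({i, j} : Finset (Fin n)) = Finset.univ := by
    refine Finset.eq_univ_of_card _ ?_
    rw [Finset.card_pair hij, Fintype.card_fin]
    have := Fin.val_ne_of_ne hij
    omega
  rw [← huniv, Finset.sum_pair hij] at hl hη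
  linear_combination l i * hη - η i * hl

lemma parallel_of_sum_smul_eq_sum_smul [IsDomain R] (h : (∑ i, l i) • η = (∑ i, η i) • l)
    (hne : (∑ i, l i) ≠ 0 ∨ (∑ i, η i) ≠ 0) (i j : Fin n) : l i * η j - l j * η i = 0 := by
  have hi := congrFun h i
  have hj := congrFun h j
  simp only [Pi.smul_apply, smul_eq_mul] at hi hj
  rcases hne with hl | hη
  · refine (mul_eq_zero.mp ?_).resolve_left hl
    linear_combination l i * hj - l j * hi
  · refine (mul_eq_zero.mp ?_).resolve_left hη
    linear_combination η i * hj - η j * hi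

lemma sum_smul_eq_sum_smul_iff [IsDomain R] :
    (∑ i, l i) • η = (∑ i, η i) • l ↔
      (∀ i j, l i * η j - l j * η i = 0) ∨ (3 ≤ n ∧ (∑ i, l i) = 0 ∧ (∑ i, η i) = 0) := by
  refine ⟨fun h => ?_, ?_⟩
  · by_cases hzero : (∑ i, l i) = 0 ∧ (∑ i, η i) = 0
    · by_cases hn : 3 ≤ n
      · exact .inr ⟨hn, hzero⟩
      · exact .inl (parallel_of_sum_eq_zero (by omega) hzero.1 hzero.2)
    · exact .inl (parallel_of_sum_smul_eq_sum_smul h (not_and_or.mp hzero))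
  · rintro (hpar | ⟨-, hl, hη⟩)
    · exact sum_smul_eq_sum_smul_of_parallel hpar
    · rw [hl, hη, zero_smul, zero_smul]

end Parallel

theorem stmt_7_general {R : Type*} [CommRing R] [IsDomain R] {n : ℕ}
    (l η : Fin n → R) :
    RingQuot.mkRingHom (u2nRel R n) (ι R l * ι R η) = 0 ↔
      ((∀ i j : Fin n, l i * η j - l j * η i = 0) ∨
        (3 ≤ n ∧ (∑ i, l i) = 0 ∧ (∑ i, η i) = 0)) := by
  rw [← RingQuot.mkAlgHom_coe R, AlgHom.coe_toRingHom, mk_ι_mul_ι_eq_zero_iff,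
    sum_smul_eq_sum_smul_iff]

/-- Over an integral domain `R`, in the rank-two Orlik–Solomon algebra on `n` generators,
`a_λ ∧ a_η = 0` iff `λ` and `η` are parallel, or `n ≥ 3` and `λ_{[n]} = 0 = η_{[n]}`. -/
theorem stmt_7 {R : Type*} [CommRing R] [IsDomain R] {n : ℕ} (hn : 2 ≤ n)
    (l η : Fin n → R) :
    RingQuot.mkRingHom (u2nRel R n) (ι R l * ι R η) = 0 ↔
      ((∀ i j : Fin n, l i * η j - l j * η i = 0) ∨
        (3 ≤ n ∧ (∑ i, l i) = 0 ∧ (∑ i, η i) = 0)) :=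
  stmt_7_general l η
end

section
/- Let R be a commutative ring and n ≥ 3. Suppose λ ∈ R^n is such that the annihilator of λ_{[n]} = Σ_i λ_i strictly contains the annihilator of the vector λ (the set of r with rλ_i = 0 for all i). Then there exists η ∈ R^n with λ_{[n]} η = η_{[n]} λ (so a_λ ∧ a_η = 0 in the rank-two Orlik–Solomon algebra) and λ, η not parallel. -/
/-- If `n ≥ 3` and the annihilator of `λ_{[n]}` strictly contains the annihilator of the
vector `λ`, then there is `η` with `λ_{[n]} η = η_{[n]} λ` and `λ, η` not parallel. -/
theorem stmt_8 {R : Type*} [CommRing R] {n : ℕ} (hn : 3 ≤ n) (l : Fin n → R)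
    (h : {r : R | ∀ i, r * l i = 0} ⊂ {r : R | r * ∑ i, l i = 0}) :
    ∃ η : Fin n → R, (∑ i, l i) • η = (∑ i, η i) • l ∧
      ∃ i j : Fin n, l i * η j ≠ l j * η i := by
  obtain ⟨r, hr0, hr1⟩ := Set.exists_of_ssubset h
  simp only [Set.mem_setOf_eq] at hr0 hr1
  push_neg at hr1
  obtain ⟨k, hk⟩ := hr1
  have h0 : (0 : ℕ) < n := by omega
  have h1 : (1 : ℕ) < n := by omega
  have h2 : (2 : ℕ) < n := by omega
  set i : Fin n := if k = ⟨0, h0⟩ then ⟨1, h1⟩ else ⟨0, h0⟩ with hi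
  set j : Fin n := if k = ⟨2, h2⟩ then ⟨1, h1⟩ else ⟨2, h2⟩ with hj
  have hij : i ≠ j := by
    rw [hi, hj]
    split_ifs with ha hb hb <;> simp_all [Fin.ext_iff]
  have hki : k ≠ i := by
    rw [hi]; split_ifs with ha <;> simp_all [Fin.ext_iff]
  have hkj : k ≠ j := by
    rw [hj]; split_ifs with ha <;> simp_all [Fin.ext_iff]
  refine ⟨fun m => (if m = i then r else 0) + (if m = j then -r else 0), ?_, k, i, ?_⟩
  · have hsum : (∑ m, ((if m = i then r else 0) + (if m = j then -r else 0))) = 0 := by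
      rw [Finset.sum_add_distrib, Finset.sum_ite_eq', Finset.sum_ite_eq']
      simp
    rw [hsum, zero_smul]
    funext m
    simp only [Pi.smul_apply, smul_eq_mul, Pi.zero_apply, mul_add]
    split_ifs <;> simp [mul_comm _ r, mul_comm _ (-r), hr0, neg_mul]
  · simp only [if_pos rfl, if_neg hij, if_neg hki, if_neg hkj, add_zero, zero_add, mul_zero]
    exact fun hc => hk (mul_comm r (l k) ▸ hc)
end
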